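/- Let X ∈ ℝ^{m×n} have rank r ≤ d, and let p, p1, p2 > 0 satisfy 1/p = 1/p1 + 1/p2. Then there exist U ∈ ℝ^{m×d} and V ∈ ℝ^{n×d} with X = U·Vᵀ such that (1/p)·‖X‖_{S_p}^p = (1/p1)·‖U‖_{S_{p1}}^{p1} + (1/p2)·‖V‖_{S_{p2}}^{p2}, where ‖A‖_{S_q}^q denotes the sum of the q-th powers of the singular values of A. -/

import Mathlib

open Matrix

/-- Singular values of a real matrix (indexed by columns, unordered):
square roots of the eigenvalues of `Aᴴ * A`. -/
noncomputable def svals {a b : ℕ} (A : Matrix (Fin a) (Fin b) ℝ) : Fin b → ℝ :=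
  fun i => Real.sqrt ((Matrix.isHermitian_conjTranspose_mul_self A).eigenvalues i)

/-- Sum of the `q`-th powers of the singular values of `A`
(i.e. `‖A‖_{S_q}^q`, the `q`-th power of the Schatten-`q` (quasi-)norm). -/
noncomputable def schattenPow {a b : ℕ} (q : ℝ) (A : Matrix (Fin a) (Fin b) ℝ) : ℝ :=
  ∑ i, svals A i ^ q

/-!
Diagonalise `Xᵀ X = Q diag(σ²) Qᵀ` with `Q` orthogonal, so that `W = X Q` has orthogonal columns
of lengths `σ = svals X` and `X = W Qᵀ`. On the support `S` of `σ` (where negative powers of `σ`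
make sense) put `U = W diag(σ^(p/p₁ - 1))` and `V = Q diag(σ^(p/p₂))`, i.e. `U_X Σ_X^(p/p₁)` and
`V_X Σ_X^(p/p₂)` in terms of an SVD. As `p/p₁ + p/p₂ = 1`,
`U Vᵀ = X`, while `Uᵀ U = diag(σ^(2p/p₁))` and `Vᵀ V = diag(σ^(2p/p₂))`; hence
`‖U‖_{S_{p₁}}^{p₁} = ‖V‖_{S_{p₂}}^{p₂} = ∑ σ^p = ‖X‖_{S_p}^p` and the identity reduces to
`1/p = 1/p₁ + 1/p₂`. Since `|S| = rank X ≤ d`, the columns indexed by `S` can be placed among `d`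
columns, the remaining ones being zero, which changes neither `U Vᵀ` nor the singular values.
-/

open Finset

lemma Fintype.sum_subtype_eq_sum_of_eq_zero {ι M : Type*} [Fintype ι] [AddCommMonoid M]
    {p : ι → Prop} [DecidablePred p] {f : ι → M} (hf : ∀ i, ¬ p i → f i = 0) :
    ∑ i : Subtype p, f i = ∑ i, f i := by
  rw [← sum_subtype_add_sum_subtype p f,
    Fintype.sum_eq_zero (fun i : {i // ¬ p i} => f i) fun i => hf i i.2, add_zero]

lemma Function.Injective.sum_comp_extend_zero {ι κ M N : Type*} [Fintype ι] [Fintype κ]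
    [Zero M] [AddCommMonoid N] {f : ι → κ} (hf : f.Injective) (μ : ι → M) {g : M → N}
    (hg : g 0 = 0) : ∑ j, g (Function.extend f μ 0 j) = ∑ i, g (μ i) := by
  classical
  rw [← sum_subset (subset_univ (univ.map ⟨f, hf⟩)), sum_map]
  · simp [hf.extend_apply]
  · intro j _ hj
    rw [Function.extend_apply' _ _ _ (by simpa using hj), Pi.zero_apply, hg]

namespace Matrix

variable {ι κ m n R : Type*}

lemma IsHermitian.sum_comp_eigenvalues_of_eq_diagonal {𝕜 : Type*} [RCLike 𝕜] [Fintype ι]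
    [DecidableEq ι] {A : Matrix ι ι 𝕜} (hA : A.IsHermitian) {μ : ι → ℝ}
    (h : A = diagonal fun i => (μ i : 𝕜)) (f : ℝ → ℝ) :
    ∑ i, f (hA.eigenvalues i) = ∑ i, f (μ i) := by
  have hroots : univ.val.map hA.eigenvalues = univ.val.map μ := by
    have hchar := hA.roots_charpoly_eq_eigenvalues
    rw [congrArg charpoly h, charpoly_diagonal, Polynomial.roots_prod] at hchar
    · refine Multiset.map_injective (RCLike.ofReal_injective (K := 𝕜)) ?_
      simpa [Multiset.map_map] using hchar.symm
    · simp [prod_ne_zero_iff, Polynomial.X_sub_C_ne_zero]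
  have hsum := congrArg (fun s => (s.map f).sum) hroots
  simp only [Multiset.map_map] at hsum
  exact hsum

lemma col_eq_zero_of_transpose_mul_self_apply_eq_zero [Fintype m] [Ring R] [LinearOrder R]
    [IsStrictOrderedRing R] {A : Matrix m ι R} {i : ι} (h : (Aᵀ * A) i i = 0) (a : m) :
    A a i = 0 := by
  rw [mul_apply'] at h
  exact congrFun (dotProduct_self_eq_zero.mp h) a

lemma submatrix_mul_transpose_submatrix_of_col_eq_zero [Fintype ι] {p : ι → Prop}
    [DecidablePred p] [NonUnitalNonAssocSemiring R] {W : Matrix m ι R}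
    (hW : ∀ i, ¬ p i → ∀ a, W a i = 0) (Q : Matrix n ι R) :
    W.submatrix id (Subtype.val : Subtype p → ι) *
      (Q.submatrix id (Subtype.val : Subtype p → ι))ᵀ = W * Qᵀ := by
  ext a b
  simp only [Matrix.mul_apply, submatrix_apply, transpose_apply, id]
  exact Fintype.sum_subtype_eq_sum_of_eq_zero (f := fun i => W a i * Q b i) fun i hi => by
    simp [hW i hi a]

lemma transpose_mul_self_submatrix_mul_diagonal [Fintype m] [Fintype ι] [DecidableEq ι]
    [DecidableEq κ] [CommSemiring R] {A : Matrix m κ R} {μ : κ → R}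
    (h : Aᵀ * A = diagonal μ) {f : ι → κ} (hf : f.Injective) (w : ι → R) :
    (A.submatrix id f * diagonal w)ᵀ * (A.submatrix id f * diagonal w) =
      diagonal (fun i => w i ^ 2 * μ (f i)) := by
  rw [transpose_mul, diagonal_transpose, transpose_submatrix, Matrix.mul_assoc,
    ← Matrix.mul_assoc (Aᵀ.submatrix _ _), ← submatrix_mul _ _ _ _ _ Function.bijective_id, h,
    submatrix_diagonal _ _ hf, diagonal_mul_diagonal, diagonal_mul_diagonal]
  congr 1
  ext i
  simp only [Function.comp_apply]
  ring

section Embedding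

variable [DecidableEq ι] [DecidableEq κ]

def _root_.Function.Embedding.toMatrix (e : ι ↪ κ) (R : Type*) [NonAssocSemiring R] :
    Matrix ι κ R :=
  (1 : Matrix κ κ R).submatrix e id

variable [NonAssocSemiring R] (e : ι ↪ κ)

lemma _root_.Function.Embedding.toMatrix_mul_transpose_self [Fintype κ] :
    e.toMatrix R * (e.toMatrix R)ᵀ = 1 := by
  rw [Function.Embedding.toMatrix, transpose_submatrix, transpose_one,
    ← submatrix_mul _ _ _ _ _ Function.bijective_id, Matrix.mul_one, submatrix_one_embedding]

lemma transpose_toMatrix_mul_diagonal_mul_toMatrix [Fintype ι] (μ : ι → R) :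
    (e.toMatrix R)ᵀ * diagonal μ * e.toMatrix R = diagonal (Function.extend e μ 0) := by
  ext j k
  rw [Matrix.mul_apply]
  simp only [Function.Embedding.toMatrix, mul_diagonal, transpose_apply, submatrix_apply, id,
    one_apply, diagonal_apply]
  by_cases hj : ∃ i, e i = j
  · obtain ⟨i, rfl⟩ := hj
    rw [sum_eq_single i (fun x _ hx => by simp [hx]) (by simp)]
    simp [e.injective.extend_apply]
  · simp [not_exists.mp hj]

end Embedding

lemma mul_toMatrix_mul_transpose [Fintype ι] [Fintype κ] [DecidableEq ι] [DecidableEq κ]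
    [CommSemiring R] (e : ι ↪ κ) (A : Matrix m ι R) (B : Matrix n ι R) :
    A * e.toMatrix R * (B * e.toMatrix R)ᵀ = A * Bᵀ := by
  rw [transpose_mul, Matrix.mul_assoc, ← Matrix.mul_assoc (e.toMatrix R),
    e.toMatrix_mul_transpose_self, Matrix.one_mul]

end Matrix

lemma schattenPow_eq_of_transpose_mul_self_eq_diagonal {a b : ℕ} (q : ℝ)
    {A : Matrix (Fin a) (Fin b) ℝ} {μ : Fin b → ℝ} (h : Aᵀ * A = diagonal μ) :
    schattenPow q A = ∑ j, √(μ j) ^ q :=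
  (isHermitian_conjTranspose_mul_self A).sum_comp_eigenvalues_of_eq_diagonal
    (by rwa [conjTranspose_eq_transpose_of_trivial]) (fun x => √x ^ q)

lemma schattenPow_mul_toMatrix {a b : ℕ} {ι : Type*} [Fintype ι] [DecidableEq ι] {q : ℝ}
    (hq : q ≠ 0) {A : Matrix (Fin a) ι ℝ} {τ : ι → ℝ} (hτ : ∀ i, 0 ≤ τ i)
    (h : Aᵀ * A = diagonal fun i => τ i ^ 2) (e : ι ↪ Fin b) :
    schattenPow q (A * e.toMatrix ℝ) = ∑ i, τ i ^ q := by
  have hgram : (A * e.toMatrix ℝ)ᵀ * (A * e.toMatrix ℝ) =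
      diagonal (Function.extend e (fun i => τ i ^ 2) 0) := by
    rw [transpose_mul, Matrix.mul_assoc, ← Matrix.mul_assoc Aᵀ, h, ← Matrix.mul_assoc,
      transpose_toMatrix_mul_diagonal_mul_toMatrix]
  rw [schattenPow_eq_of_transpose_mul_self_eq_diagonal q hgram,
    e.injective.sum_comp_extend_zero _ (g := fun x => √x ^ q) (by simp [Real.zero_rpow hq])]
  simp_rw [Real.sqrt_sq (hτ _)]

lemma exists_orthogonal_transpose_mul_self_eq_diagonal_svals {m n : ℕ}
    (X : Matrix (Fin m) (Fin n) ℝ) :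
    ∃ Q : Matrix (Fin n) (Fin n) ℝ, Q * Qᵀ = 1 ∧ Qᵀ * Q = 1 ∧
      (X * Q)ᵀ * (X * Q) = diagonal (fun i => svals X i ^ 2) := by
  set hX := isHermitian_conjTranspose_mul_self X
  set Q : Matrix (Fin n) (Fin n) ℝ := (hX.eigenvectorUnitary : Matrix (Fin n) (Fin n) ℝ)
  have hQ : star Q = Qᵀ := conjTranspose_eq_transpose_of_trivial Q
  refine ⟨Q, hQ ▸ Unitary.coe_mul_star_self _, hQ ▸ Unitary.coe_star_mul_self _, ?_⟩
  have hgram : (X * Q)ᵀ * (X * Q) = star Q * (Xᴴ * X) * Q := by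
    rw [transpose_mul, ← hQ, conjTranspose_eq_transpose_of_trivial]
    simp only [Matrix.mul_assoc]
  rw [hgram]
  convert hX.conjStarAlgAut_star_eigenvectorUnitary using 1
  · exact (Unitary.conjStarAlgAut_star_apply _ _).symm
  congr 1
  ext i
  exact Real.sq_sqrt (eigenvalues_conjTranspose_mul_self_nonneg X i)

lemma card_svals_ne_zero {m n : ℕ} (X : Matrix (Fin m) (Fin n) ℝ) :
    Fintype.card {i // svals X i ≠ 0} = X.rank := by
  rw [← rank_conjTranspose_mul_self,
    (isHermitian_conjTranspose_mul_self X).rank_eq_card_non_zero_eigs]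
  exact Fintype.card_congr (Equiv.subtypeEquivRight fun i =>
    not_congr (Real.sqrt_eq_zero (eigenvalues_conjTranspose_mul_self_nonneg X i)))

lemma schattenPow_eq_sum_svals_ne_zero {m n : ℕ} {q : ℝ} (hq : q ≠ 0)
    (X : Matrix (Fin m) (Fin n) ℝ) :
    schattenPow q X = ∑ i : {i // svals X i ≠ 0}, svals X i ^ q :=
  (Fintype.sum_subtype_eq_sum_of_eq_zero fun i hi => by
    rw [not_not.mp hi, Real.zero_rpow hq]).symm

section SupportScale

variable {m n ι : Type*} [Fintype ι] [DecidableEq ι] {σ : ι → ℝ}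

noncomputable def supportScale (A : Matrix m ι ℝ) (σ : ι → ℝ) (c : ℝ) :
    Matrix m {i // σ i ≠ 0} ℝ :=
  A.submatrix id (Subtype.val : {i // σ i ≠ 0} → ι) * diagonal fun s : {i // σ i ≠ 0} => σ s ^ c

lemma supportScale_mul_transpose_supportScale [Fintype m] (hσ : ∀ i, 0 ≤ σ i)
    {W : Matrix m ι ℝ} (hW : Wᵀ * W = diagonal fun i => σ i ^ 2) (Q : Matrix n ι ℝ) {c c' : ℝ}
    (hc : c + c' = 0) : supportScale W σ c * (supportScale Q σ c')ᵀ = W * Qᵀ := by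
  have hcancel : (diagonal fun s : {i // σ i ≠ 0} => σ s ^ c) *
      diagonal (fun s : {i // σ i ≠ 0} => σ s ^ c') = 1 := by
    rw [diagonal_mul_diagonal, ← diagonal_one]
    congr 1
    ext s
    rw [← Real.rpow_add ((hσ s).lt_of_ne' s.2), hc, Real.rpow_zero]
  have hcol : ∀ i, ¬ σ i ≠ 0 → ∀ a, W a i = 0 := fun i hi =>
    col_eq_zero_of_transpose_mul_self_apply_eq_zero (by simp [hW, not_not.mp hi])
  rw [supportScale, supportScale, transpose_mul, diagonal_transpose, Matrix.mul_assoc,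
    ← Matrix.mul_assoc (diagonal _), hcancel, Matrix.one_mul,
    submatrix_mul_transpose_submatrix_of_col_eq_zero hcol]

lemma transpose_mul_self_supportScale_sub_one [Fintype m] {W : Matrix m ι ℝ}
    (hW : Wᵀ * W = diagonal fun i => σ i ^ 2) (c : ℝ) :
    (supportScale W σ (c - 1))ᵀ * supportScale W σ (c - 1) =
      diagonal fun s : {i // σ i ≠ 0} => (σ s ^ c) ^ 2 := by
  rw [supportScale, transpose_mul_self_submatrix_mul_diagonal hW Subtype.val_injective]
  congr 1
  ext s
  rw [Real.rpow_sub_one s.2]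
  field_simp [s.2]

lemma transpose_mul_self_supportScale [Fintype n] {Q : Matrix n ι ℝ} (hQ : Qᵀ * Q = 1)
    (c : ℝ) :
    (supportScale Q σ c)ᵀ * supportScale Q σ c =
      diagonal fun s : {i // σ i ≠ 0} => (σ s ^ c) ^ 2 := by
  rw [supportScale, transpose_mul_self_submatrix_mul_diagonal (hQ.trans diagonal_one.symm)
    Subtype.val_injective]
  simp

end SupportScale

theorem bi_schatten_exists_factorization (m n d : ℕ) (p p1 p2 : ℝ)
    (hp : 0 < p) (hp1 : 0 < p1) (hp2 : 0 < p2) (hsum : 1 / p = 1 / p1 + 1 / p2)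
    (X : Matrix (Fin m) (Fin n) ℝ) (hrank : X.rank ≤ d) :
    ∃ (U : Matrix (Fin m) (Fin d) ℝ) (V : Matrix (Fin n) (Fin d) ℝ),
      X = U * Vᵀ ∧
        (1 / p) * schattenPow p X =
          (1 / p1) * schattenPow p1 U + (1 / p2) * schattenPow p2 V := by
  obtain ⟨Q, hQQt, hQtQ, hXQ⟩ := exists_orthogonal_transpose_mul_self_eq_diagonal_svals X
  obtain ⟨e⟩ : Nonempty ({i // svals X i ≠ 0} ↪ Fin d) :=
    Function.Embedding.nonempty_of_card_le (by rwa [Fintype.card_fin, card_svals_ne_zero])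
  have hσ : ∀ i, 0 ≤ svals X i := fun i => Real.sqrt_nonneg _
  have hexp : (p / p1 - 1) + p / p2 = 0 := by
    field_simp at hsum ⊢
    linarith
  refine ⟨supportScale (X * Q) (svals X) (p / p1 - 1) * e.toMatrix ℝ,
    supportScale Q (svals X) (p / p2) * e.toMatrix ℝ, ?_, ?_⟩
  · rw [mul_toMatrix_mul_transpose, supportScale_mul_transpose_supportScale hσ hXQ _ hexp,
      Matrix.mul_assoc, hQQt, Matrix.mul_one]
  · rw [schattenPow_mul_toMatrix hp1.ne' (fun _ => Real.rpow_nonneg (hσ _) _)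
        (transpose_mul_self_supportScale_sub_one hXQ _),
      schattenPow_mul_toMatrix hp2.ne' (fun _ => Real.rpow_nonneg (hσ _) _)
        (transpose_mul_self_supportScale hQtQ _),
      schattenPow_eq_sum_svals_ne_zero hp.ne']
    simp_rw [← Real.rpow_mul (hσ _), div_mul_cancel₀ p hp1.ne', div_mul_cancel₀ p hp2.ne', hsum]
    ring
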